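/- arXiv:2310.17635 — 3 statements merged into one kernel-verified Lean document; each statement's English description precedes it below -/
import Mathlib

section
/- Fix d > 0. Let ℓ = ⌊(log n)²⌋ and let B be an n×n random matrix with independent {0,1}-entries where B_{ij} = 1 with probability d/n if max(i,j) ≤ n−ℓ and with probability √(log n)/n otherwise. Then for every η > 0 there exists N such that for all n ≥ N, with probability at least 1 − n^{−1+η} the following holds: for every subset S ⊆ [n] with |S| ≤ √(log n), one has Σ_{i,j ∈ S} B_{ij} ≤ |S|. -/
open MeasureTheory

/-- The Bernoulli measure on `ℝ`, putting mass `p` at `1` and mass `1 - p` at `0`. -/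
noncomputable def bernoulliR (p : ℝ) : Measure ℝ :=
  ENNReal.ofReal p • Measure.dirac 1 + ENNReal.ofReal (1 - p) • Measure.dirac 0

/-- The law of the matrix `B`: independent entries, equal to `1` with probability `d/n`
if `max(i,j) ≤ n - ℓ` (with `ℓ = ⌊(log n)²⌋`, indices `1`-based) and with probability
`√(log n)/n` otherwise. -/
noncomputable def lawB (n : ℕ) (d : ℝ) : Measure (Fin n → Fin n → ℝ) :=
  Measure.pi fun i => Measure.pi fun j =>
    if (i : ℕ) + 1 ≤ n - ⌊(Real.log n) ^ 2⌋₊ ∧ (j : ℕ) + 1 ≤ n - ⌊(Real.log n) ^ 2⌋₊ then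
      bernoulliR (d / n)
    else bernoulliR (Real.sqrt (Real.log n) / n)

/-!
A union bound. A `0/1` matrix violates the property only if some `S` with `|S| = k ≤ √(log n)`
carries `k + 1` ones inside `S × S`. Every entry is `1` with probability at most `log n / n`
(once `d ≤ log n`), so the failure probability is at most
`∑_{k ≤ √(log n)} C(n, k) C(k², k + 1) (log n / n)^(k + 1)`, which is at most
`(√(log n) + 1) (log n)^(2√(log n) + 2) / n`; the numerator is
`exp (O(√(log n) log log n)) = n^{o(1)}`.
-/

open Filter Finset Real
open scoped ENNReal

lemma bernoulliR_singleton_one (p : ℝ) : bernoulliR p {1} = ENNReal.ofReal p := by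
  simp [bernoulliR]

lemma bernoulliR_compl_zero_one (p : ℝ) : bernoulliR p {0, 1}ᶜ = 0 := by
  simp [bernoulliR]

lemma isProbabilityMeasure_bernoulliR {p : ℝ} (h0 : 0 ≤ p) (h1 : p ≤ 1) :
    IsProbabilityMeasure (bernoulliR p) :=
  ⟨by simp [bernoulliR, ← ENNReal.ofReal_add h0 (sub_nonneg.2 h1)]⟩

section ZeroOneMatrix

variable {ι : Type*} [Fintype ι]

def sparseOnSmallSets (s : ℝ) : Set (ι → ι → ℝ) :=
  {A | ∀ S : Finset ι, (#S : ℝ) ≤ s → ∑ i ∈ S, ∑ j ∈ S, A i j ≤ #S}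

omit [Fintype ι] in
lemma exists_powersetCard_forall_eq_one {A : ι → ι → ℝ} (hA : ∀ i j, A i j = 0 ∨ A i j = 1)
    {S : Finset ι} (hS : (#S : ℝ) < ∑ i ∈ S, ∑ j ∈ S, A i j) :
    ∃ T ∈ powersetCard (#S + 1) (S ×ˢ S), ∀ t ∈ T, A t.1 t.2 = 1 := by
  classical
  have hsum : ∑ i ∈ S, ∑ j ∈ S, A i j = #{t ∈ S ×ˢ S | A t.1 t.2 = 1} := by
    rw [natCast_card_filter, sum_product]
    refine sum_congr rfl fun i _ => sum_congr rfl fun j _ => ?_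
    rcases hA i j with h | h <;> simp [h]
  rw [hsum, Nat.cast_lt, Nat.lt_iff_add_one_le] at hS
  obtain ⟨T, hTS, hT⟩ := exists_subset_card_eq hS
  exact ⟨T, mem_powersetCard.2 ⟨hTS.trans (filter_subset _ _), hT⟩,
    fun t ht => (mem_filter.1 (hTS ht)).2⟩

variable (μ : ι → ι → Measure ℝ) [∀ i j, IsProbabilityMeasure (μ i j)]

lemma pi_pi_setOf_forall_eq_one_le {q : ℝ≥0∞} (hq : ∀ i j, μ i j {1} ≤ q)
    (T : Finset (ι × ι)) :
    Measure.pi (fun i => Measure.pi (μ i)) {A | ∀ t ∈ T, A t.1 t.2 = 1} ≤ q ^ #T := by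
  classical
  have hT : {A : ι → ι → ℝ | ∀ t ∈ T, A t.1 t.2 = 1} =
      Set.univ.pi fun i => Set.univ.pi fun j => if (i, j) ∈ T then {1} else Set.univ := by
    ext A
    simp only [Set.mem_ofPred_eq, Set.mem_univ_pi, Prod.forall]
    refine forall₂_congr fun i j => ?_
    split_ifs <;> simp [*]
  calc Measure.pi (fun i => Measure.pi (μ i)) {A | ∀ t ∈ T, A t.1 t.2 = 1}
      = ∏ t : ι × ι, if t ∈ T then μ t.1 t.2 {1} else 1 := by
        simp_rw [hT, Measure.pi_pi, apply_ite (μ _ _), measure_univ, Fintype.prod_prod_type]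
    _ ≤ ∏ t : ι × ι, if t ∈ T then q else 1 := by
        gcongr with t
        split_ifs
        exacts [hq _ _, le_rfl]
    _ = q ^ #T := by rw [prod_ite_mem, univ_inter, prod_const]

lemma ae_pi_pi_eq_zero_or_eq_one (h01 : ∀ i j, μ i j {0, 1}ᶜ = 0) :
    ∀ᵐ A ∂Measure.pi (fun i => Measure.pi (μ i)), ∀ i j, A i j = 0 ∨ A i j = 1 := by
  simp only [ae_all_iff]
  intro i j
  have h : ∀ᵐ x ∂μ i j, x = 0 ∨ x = 1 := (measure_eq_zero_iff_ae_notMem.1 (h01 i j)).mono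
    fun x hx => by simpa [or_iff_not_imp_left] using hx
  exact (Measure.tendsto_eval_ae_ae (μ := fun i => Measure.pi (μ i)) (i := i)).eventually
    ((Measure.tendsto_eval_ae_ae (i := j)).eventually h)

lemma pi_pi_compl_sparseOnSmallSets_le (h01 : ∀ i j, μ i j {0, 1}ᶜ = 0) {q : ℝ≥0∞}
    (hq : ∀ i j, μ i j {1} ≤ q) (s : ℝ) :
    Measure.pi (fun i => Measure.pi (μ i)) (sparseOnSmallSets s)ᶜ ≤
      ∑ k ∈ range (⌊s⌋₊ + 1), ((Fintype.card ι).choose k * (k * k).choose (k + 1) : ℝ≥0∞) *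
        q ^ (k + 1) := by
  classical
  set E : Finset (ι × ι) → Set (ι → ι → ℝ) := fun T => {A | ∀ t ∈ T, A t.1 t.2 = 1}
  have hcover : (sparseOnSmallSets s)ᶜ ≤ᵐ[Measure.pi fun i => Measure.pi (μ i)]
      ⋃ k ∈ range (⌊s⌋₊ + 1), ⋃ S ∈ powersetCard k univ,
        ⋃ T ∈ powersetCard (k + 1) (S ×ˢ S), E T := by
    filter_upwards [ae_pi_pi_eq_zero_or_eq_one μ h01] with A hA hbad
    obtain ⟨S, hSs, hS⟩ : ∃ S : Finset ι, (#S : ℝ) ≤ s ∧ (#S : ℝ) < ∑ i ∈ S, ∑ j ∈ S, A i j := by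
      by_contra! h
      exact hbad h
    obtain ⟨T, hT, hAT⟩ := exists_powersetCard_forall_eq_one hA hS
    show A ∈ ⋃ k ∈ range (⌊s⌋₊ + 1), ⋃ S ∈ powersetCard k univ,
      ⋃ T ∈ powersetCard (k + 1) (S ×ˢ S), E T
    simp only [Set.mem_iUnion, mem_range, mem_powersetCard, subset_univ, true_and, exists_prop]
    exact ⟨#S, Nat.lt_succ_of_le (Nat.le_floor hSs), S, rfl, T, mem_powersetCard.1 hT, hAT⟩
  refine (measure_mono_ae hcover).trans <| (measure_biUnion_finset_le _ _).trans <|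
    sum_le_sum fun k _ => (measure_biUnion_finset_le _ _).trans ?_
  calc ∑ S ∈ powersetCard k univ, Measure.pi (fun i => Measure.pi (μ i))
        (⋃ T ∈ powersetCard (k + 1) (S ×ˢ S), E T)
      ≤ ∑ S ∈ powersetCard k (univ : Finset ι), ∑ T ∈ powersetCard (k + 1) (S ×ˢ S),
          q ^ (k + 1) := by
        refine sum_le_sum fun S _ => (measure_biUnion_finset_le _ _).trans <|
          sum_le_sum fun T hT => ?_
        rw [← (mem_powersetCard.1 hT).2]
        exact pi_pi_setOf_forall_eq_one_le μ hq T
    _ = _ := by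
        rw [sum_congr rfl fun S hS => by
          rw [sum_const, card_powersetCard, card_product, (mem_powersetCard.1 hS).2]]
        simp [sum_const, card_powersetCard, nsmul_eq_mul, mul_assoc]

end ZeroOneMatrix

lemma one_sub_ofReal_sum_le_pi_pi_bernoulliR {ι : Type*} [Fintype ι] {μ : ι → ι → Measure ℝ}
    {r : ℝ} (hr0 : 0 ≤ r) (hr1 : r ≤ 1) (hμ : ∀ i j, ∃ p, 0 ≤ p ∧ p ≤ r ∧ μ i j = bernoulliR p)
    (s : ℝ) :
    1 - ENNReal.ofReal (∑ k ∈ range (⌊s⌋₊ + 1),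
        (Fintype.card ι).choose k * (k * k).choose (k + 1) * r ^ (k + 1)) ≤
      Measure.pi (fun i => Measure.pi (μ i)) (sparseOnSmallSets s) := by
  choose p hp0 hpr hμp using hμ
  obtain rfl : μ = fun i j => bernoulliR (p i j) := funext₂ hμp
  have := fun i j => isProbabilityMeasure_bernoulliR (hp0 i j) ((hpr i j).trans hr1)
  calc _ = 1 - ∑ k ∈ range (⌊s⌋₊ + 1), ((Fintype.card ι).choose k * (k * k).choose (k + 1) :
        ℝ≥0∞) * ENNReal.ofReal r ^ (k + 1) := by
        rw [ENNReal.ofReal_sum_of_nonneg fun k _ => by positivity]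
        refine congrArg _ (sum_congr rfl fun k _ => ?_)
        rw [ENNReal.ofReal_mul (by positivity), ENNReal.ofReal_mul (by positivity),
          ENNReal.ofReal_pow hr0, ENNReal.ofReal_natCast, ENNReal.ofReal_natCast]
    _ ≤ 1 - _ := tsub_le_tsub_left (pi_pi_compl_sparseOnSmallSets_le _
          (fun _ _ => bernoulliR_compl_zero_one _)
          (fun i j => (bernoulliR_singleton_one _).trans_le (ENNReal.ofReal_le_ofReal (hpr i j)))
          s) 1
    _ ≤ _ := tsub_le_iff_right.2 <| measure_univ (μ := Measure.pi fun i =>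
        Measure.pi fun j => bernoulliR (p i j)) ▸ measure_univ_le_add_compl _

lemma eventually_two_mul_sqrt_add_three_mul_log_le {η : ℝ} (hη : 0 < η) :
    ∀ᶠ x in atTop, (2 * √x + 3) * log x ≤ η * x := by
  filter_upwards [(isLittleO_log_rpow_atTop one_half_pos).bound (c := η / 5) (by positivity),
    eventually_ge_atTop 9] with x hlog hx
  have hlog0 : 0 ≤ log x := log_nonneg (by linarith)
  have hsqrt : 3 ≤ √x := le_sqrt_of_sq_le (by linarith)
  rw [← sqrt_eq_rpow, norm_of_nonneg hlog0, norm_of_nonneg (sqrt_nonneg x)] at hlog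
  calc (2 * √x + 3) * log x ≤ 5 * √x * (η / 5 * √x) := by gcongr; linarith
    _ = η * x := by rw [show 5 * √x * (η / 5 * √x) = η * (√x * √x) by ring,
      mul_self_sqrt (by linarith)]

lemma floor_sqrt_succ_mul_pow_le_exp {L η : ℝ} (hL : 9 ≤ L)
    (h : (2 * √L + 3) * log L ≤ η * L) :
    (⌊√L⌋₊ + 1) * L ^ (2 * ⌊√L⌋₊ + 2) ≤ exp (η * L) := by
  have hK : (⌊√L⌋₊ : ℝ) ≤ √L := Nat.floor_le (sqrt_nonneg L)
  have hsqrt : 3 ≤ √L := le_sqrt_of_sq_le (by linarith)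
  have hKL : (⌊√L⌋₊ : ℝ) + 1 ≤ L := by nlinarith [mul_self_sqrt (show 0 ≤ L by linarith)]
  calc (⌊√L⌋₊ + 1) * L ^ (2 * ⌊√L⌋₊ + 2) ≤ L ^ (2 * ⌊√L⌋₊ + 3) := by
        rw [pow_succ' L (2 * ⌊√L⌋₊ + 2)]; gcongr
    _ = exp ((2 * ⌊√L⌋₊ + 3 : ℕ) * log L) := by
        rw [← log_pow, exp_log (by positivity)]
    _ ≤ exp (η * L) := by
        refine exp_le_exp.2 (le_trans ?_ h)
        push_cast
        gcongr
        exact log_nonneg (by linarith)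

lemma choose_mul_choose_mul_div_pow_le {n k : ℕ} {L : ℝ} (hn : 0 < n) (hk : (k : ℝ) * k ≤ L) :
    n.choose k * (k * k).choose (k + 1) * (L / n) ^ (k + 1) ≤ L ^ (2 * k + 2) / n := by
  have hL : 0 ≤ L := (mul_self_nonneg _).trans hk
  calc n.choose k * (k * k).choose (k + 1) * (L / n) ^ (k + 1)
      ≤ (n : ℝ) ^ k * L ^ (k + 1) * (L / n) ^ (k + 1) := by
        gcongr
        · exact_mod_cast Nat.choose_le_pow n k
        · calc ((k * k).choose (k + 1) : ℝ) ≤ ((k * k : ℕ) : ℝ) ^ (k + 1) := by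
                exact_mod_cast Nat.choose_le_pow _ _
            _ ≤ L ^ (k + 1) := by push_cast; gcongr
    _ = L ^ (2 * k + 2) / n := by
        have : (n : ℝ) ≠ 0 := by positivity
        rw [div_pow, pow_succ (n : ℝ) k]
        field_simp
        ring

lemma sum_choose_mul_choose_mul_div_pow_le {n : ℕ} {L : ℝ} (hn : 0 < n) (hL : 1 ≤ L) :
    ∑ k ∈ range (⌊√L⌋₊ + 1), n.choose k * (k * k).choose (k + 1) * (L / n) ^ (k + 1) ≤
      (⌊√L⌋₊ + 1) * L ^ (2 * ⌊√L⌋₊ + 2) / n := by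
  have hK : (⌊√L⌋₊ : ℝ) * ⌊√L⌋₊ ≤ L := by
    have := Nat.floor_le (sqrt_nonneg L)
    nlinarith [mul_self_sqrt (show 0 ≤ L by linarith), Nat.cast_nonneg (α := ℝ) ⌊√L⌋₊]
  refine (sum_le_card_nsmul _ _ (L ^ (2 * ⌊√L⌋₊ + 2) / n) fun k hk => ?_).trans_eq ?_
  · have hkK : k ≤ ⌊√L⌋₊ := Nat.lt_succ_iff.1 (mem_range.1 hk)
    refine (choose_mul_choose_mul_div_pow_le hn (hK.trans' ?_)).trans ?_
    · exact mul_self_le_mul_self k.cast_nonneg (by exact_mod_cast hkK)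
    · gcongr
  · rw [card_range, nsmul_eq_mul, mul_div_assoc]
    push_cast
    ring

theorem diagonal_block_sum_bound (d : ℝ) (hd : 0 < d) (η : ℝ) (hη : 0 < η) :
    ∃ N : ℕ, ∀ n : ℕ, N ≤ n →
      ENNReal.ofReal (1 - (n : ℝ) ^ (-1 + η)) ≤
        lawB n d
          {A | ∀ S : Finset (Fin n), (S.card : ℝ) ≤ Real.sqrt (Real.log n) →
            (∑ i ∈ S, ∑ j ∈ S, A i j) ≤ (S.card : ℝ)} := by
  have hlog : Tendsto (fun n : ℕ => log n) atTop atTop :=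
    tendsto_log_atTop.comp tendsto_natCast_atTop_atTop
  obtain ⟨N, hN⟩ := eventually_atTop.1 <| (eventually_gt_atTop 0).and <| hlog.eventually <|
    (eventually_ge_atTop 9).and <| (eventually_ge_atTop d).and <|
      eventually_two_mul_sqrt_add_three_mul_log_le hη
  refine ⟨N, fun n hn => ?_⟩
  obtain ⟨hn0, hL9, hdL, hLη⟩ := hN n hn
  have hn0' : (0 : ℝ) < n := Nat.cast_pos.2 hn0
  have hr1 : log n / n ≤ 1 :=
    div_le_one_of_le₀ ((log_le_sub_one_of_pos hn0').trans (by linarith)) hn0'.le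
  have hsqrt : √(log n) ≤ log n := (sqrt_le_left (by linarith)).2 (by nlinarith)
  have hsum : ∑ k ∈ range (⌊√(log n)⌋₊ + 1),
      n.choose k * (k * k).choose (k + 1) * (log n / n) ^ (k + 1) ≤ (n : ℝ) ^ (-1 + η) := by
    rw [rpow_def_of_pos hn0', show log n * (-1 + η) = η * log n - log n by ring, exp_sub,
      exp_log hn0']
    exact (sum_choose_mul_choose_mul_div_pow_le hn0 (by linarith)).trans <|
      div_le_div_of_nonneg_right (floor_sqrt_succ_mul_pow_le_exp hL9 hLη) hn0'.le
  calc ENNReal.ofReal (1 - (n : ℝ) ^ (-1 + η))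
      ≤ 1 - ENNReal.ofReal (∑ k ∈ range (⌊√(log n)⌋₊ + 1),
          (Fintype.card (Fin n)).choose k * (k * k).choose (k + 1) * (log n / n) ^ (k + 1)) := by
        rw [ENNReal.ofReal_sub _ (by positivity), ENNReal.ofReal_one, Fintype.card_fin]
        exact tsub_le_tsub_left (ENNReal.ofReal_le_ofReal hsum) 1
    _ ≤ lawB n d (sparseOnSmallSets √(log n)) := by
        refine one_sub_ofReal_sum_le_pi_pi_bernoulliR (by positivity) hr1 (fun i j => ?_) _
        split_ifs
        exacts [⟨d / n, by positivity, by gcongr, rfl⟩,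
          ⟨√(log n) / n, by positivity, by gcongr, rfl⟩]
end

section
/- Let M be an n×m complex matrix and let M′ be the (n+1)×m matrix obtained from M by appending the row X ∈ ℂ^m. Let v_1, …, v_m be an orthonormal basis of ℂ^m consisting of eigenvectors of M†M with M†M v_i = σ_i(M)² v_i for each i. Then for every x ∈ ℂ, det( (M′)†M′ − x·I_m ) = ∏_{i=1}^m (σ_i(M)² − x) + Σ_{i=1}^m |⟨v_i, X†⟩|² · ∏_{j ≠ i} (σ_j(M)² − x). In particular, the squares of the singular values of M′ are exactly the roots of the right-hand side polynomial in x. -/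
open Matrix

/-- The standard Hermitian inner product on `ℂ^m` (conjugate-linear in the first variable). -/
noncomputable def cInner {m : ℕ} (x y : Fin m → ℂ) : ℂ :=
  ∑ j, starRingEnd ℂ (x j) * y j

/-- The `(n+1) × m` matrix obtained from an `n × m` matrix `M` by appending the row `X`. -/
def appendRow {n m : ℕ} (M : Matrix (Fin n) (Fin m) ℂ) (X : Fin m → ℂ) :
    Matrix (Fin (n + 1)) (Fin m) ℂ :=
  Matrix.of fun i j => if h : (i : ℕ) < n then M ⟨(i : ℕ), h⟩ j else X j

/-!
Appending the row `X` adds the rank-one matrix `X̄ Xᵀ` to the Gram matrix `MᴴM`. Conjugating by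
the unitary matrix `P` whose columns are the `v_i` turns `MᴴM - x I` into `diag (σ_i² - x)` and the
rank-one term into `w w̄ᵀ` with `w_i = ⟨v_i, X†⟩`. The determinant of a diagonal matrix plus a
rank-one matrix is then read off from the matrix determinant lemma in its adjugate form
`det (A + u vᵀ) = det A + vᵀ (adj A) u`, which holds over any commutative ring, so no invertibility
of `diag (σ_i² - x)` is needed.
-/

namespace Matrix

variable {n R : Type*} [Fintype n] [DecidableEq n] [CommRing R]

theorem det_one_add_vecMulVec (u v : n → R) : (1 + vecMulVec u v).det = 1 + v ⬝ᵥ u := by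
  rw [vecMulVec_eq Unit, det_one_add_replicateCol_mul_replicateRow]

theorem det_add_vecMulVec_row (N : Matrix n n R) (u : n → R) (i : n) :
    (N + vecMulVec u (N i)).det = (1 + u i) * N.det := by
  have h : N + vecMulVec u (N i) = (1 + vecMulVec u (Pi.single i 1)) * N := by
    rw [Matrix.add_mul, Matrix.one_mul, vecMulVec_mul, single_one_vecMul]
    rfl
  rw [h, det_mul, det_one_add_vecMulVec, single_one_dotProduct]

/- The rank-one term is added one row at a time: once row `i` is replaced by `v`, the rank-one
parts already added to the other rows are multiples of row `i` and no longer change the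
determinant. -/
theorem det_add_vecMulVec (A : Matrix n n R) (u v : n → R) :
    (A + vecMulVec u v).det = A.det + v ⬝ᵥ (adjugate A *ᵥ u) := by
  suffices h : ∀ s : Finset n, (A + vecMulVec (s.piecewise u 0) v).det =
      A.det + ∑ i ∈ s, u i * (A.updateRow i v).det by
    rw [← Finset.piecewise_univ u 0, h, dotProduct_mulVec, ← mulVec_transpose,
      adjugate_transpose, ← cramer_eq_adjugate_mulVec, dotProduct_comm, Finset.piecewise_univ]
    simp only [dotProduct, cramer_transpose_apply]
  intro s
  induction s using Finset.induction_on with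
  | empty => simp
  | insert i s hi ih =>
    set p := s.piecewise u 0
    have hpi : p i = 0 := Finset.piecewise_eq_of_notMem _ _ _ hi
    have hrow : A + vecMulVec ((insert i s).piecewise u 0) v =
        (A + vecMulVec p v).updateRow i ((A + vecMulVec p v) i + u i • v) := by
      ext j k
      rcases eq_or_ne j i with rfl | hj
      · simp [hpi, vecMulVec_apply]
      · simp [hj, updateRow_ne, p, vecMulVec_apply, Finset.piecewise_insert_of_ne]
    have hupd : (A + vecMulVec p v).updateRow i v =
        A.updateRow i v + vecMulVec p (A.updateRow i v i) := by
      ext j k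
      rcases eq_or_ne j i with rfl | hj
      · simp [hpi, vecMulVec_apply]
      · simp [hj, updateRow_ne, vecMulVec_apply]
    rw [hrow, det_updateRow_add, updateRow_eq_self, ih, det_updateRow_smul, hupd,
      det_add_vecMulVec_row, hpi, Finset.sum_insert hi]
    ring

theorem det_diagonal_add_vecMulVec (d u v : n → R) :
    (diagonal d + vecMulVec u v).det =
      ∏ i, d i + ∑ i, u i * v i * ∏ j ∈ Finset.univ.erase i, d j := by
  rw [det_add_vecMulVec, det_diagonal, adjugate_diagonal]
  simp only [dotProduct, mulVec_diagonal]
  congr 1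
  exact Finset.sum_congr rfl fun i _ => by ring

theorem det_mul_mul_of_mul_eq_one {Q P : Matrix n n R} (h : Q * P = 1) (B : Matrix n n R) :
    (Q * B * P).det = B.det := by
  rw [det_mul, det_mul, mul_right_comm, ← det_mul, h, det_one, one_mul]

end Matrix

theorem conjTranspose_appendRow_mul_self {n m : ℕ} (M : Matrix (Fin n) (Fin m) ℂ)
    (X : Fin m → ℂ) :
    (appendRow M X)ᴴ * appendRow M X =
      Mᴴ * M + vecMulVec (fun j => starRingEnd ℂ (X j)) X := by
  ext j k
  simp [mul_apply, Fin.sum_univ_castSucc, appendRow, vecMulVec_apply]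

theorem Finset.Icc_one_eq_map_univ (m : ℕ) :
    Finset.Icc 1 m =
      (Finset.univ : Finset (Fin m)).map (Fin.valEmbedding.trans (addRightEmbedding 1)) := by
  rw [← Finset.map_map, Fin.map_valEmbedding_univ, Nat.Iio_eq_range, Finset.range_eq_Ico,
    Finset.map_add_right_Ico, zero_add, Finset.Ico_add_one_right_eq_Icc]

theorem charpoly_after_row_addition_general (n m : ℕ)
    (M : Matrix (Fin n) (Fin m) ℂ) (X : Fin m → ℂ)
    (σ : ℕ → ℝ) (v : ℕ → Fin m → ℂ)
    (hON : ∀ i ∈ Finset.Icc 1 m, ∀ j ∈ Finset.Icc 1 m,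
      cInner (v i) (v j) = if i = j then 1 else 0)
    (heig : ∀ i ∈ Finset.Icc 1 m,
      (Mᴴ * M).mulVec (v i) = (((σ i : ℂ)) ^ 2) • v i) :
    ∀ x : ℂ,
      ((appendRow M X)ᴴ * appendRow M X - x • 1).det =
        (∏ i ∈ Finset.Icc 1 m, ((σ i : ℂ) ^ 2 - x)) +
          ∑ i ∈ Finset.Icc 1 m,
            ((‖cInner (v i) (fun j => starRingEnd ℂ (X j))‖ : ℂ)) ^ 2 *
              ∏ j ∈ (Finset.Icc 1 m).erase i, ((σ j : ℂ) ^ 2 - x) := by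
  intro x
  have hmem (k : Fin m) : (k : ℕ) + 1 ∈ Finset.Icc 1 m := by simp [Nat.succ_le_of_lt k.isLt]
  set d : Fin m → ℂ := fun k => (σ (k + 1) : ℂ) ^ 2
  set P : Matrix (Fin m) (Fin m) ℂ := of fun j k => v (k + 1) j
  have hPP : Pᴴ * P = 1 := by
    ext i k
    have h := hON _ (hmem i) _ (hmem k)
    simp only [add_left_inj, Fin.val_inj] at h
    rw [one_apply]
    exact h
  have hMP : Mᴴ * M * P = P * diagonal d := by
    ext j k
    rw [mul_diagonal]
    exact (congrFun (heig _ (hmem k)) j).trans (mul_comm _ _)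
  have hconj : Pᴴ * ((appendRow M X)ᴴ * appendRow M X - x • 1) * P =
      diagonal (fun k => d k - x) +
        vecMulVec (Pᴴ *ᵥ fun j => starRingEnd ℂ (X j)) (X ᵥ* P) := by
    rw [conjTranspose_appendRow_mul_self, Matrix.mul_sub, Matrix.sub_mul, Matrix.mul_add,
      Matrix.add_mul, Matrix.mul_assoc Pᴴ, hMP, ← Matrix.mul_assoc, hPP, Matrix.one_mul,
      mul_vecMulVec, vecMulVec_mul, Matrix.mul_smul, Matrix.mul_one, Matrix.smul_mul, hPP,
      smul_one_eq_diagonal, ← diagonal_sub]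
    abel
  rw [← det_mul_mul_of_mul_eq_one hPP, hconj, det_diagonal_add_vecMulVec,
    Finset.Icc_one_eq_map_univ, Finset.prod_map, Finset.sum_map]
  congr 1
  refine Finset.sum_congr rfl fun k _ => ?_
  rw [← Finset.map_erase, Finset.prod_map]
  have hleft : (Pᴴ *ᵥ fun j => starRingEnd ℂ (X j)) k =
      cInner (v (k + 1)) (fun j => starRingEnd ℂ (X j)) := rfl
  have hright : (X ᵥ* P) k =
      starRingEnd ℂ (cInner (v (k + 1)) (fun j => starRingEnd ℂ (X j))) := by
    simp [cInner, vecMul, dotProduct, P, mul_comm]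
  rw [hleft, hright, RCLike.mul_conj]
  rfl

theorem charpoly_after_row_addition (n m : ℕ)
    (M : Matrix (Fin n) (Fin m) ℂ) (X : Fin m → ℂ)
    (σ : ℕ → ℝ) (v : ℕ → Fin m → ℂ)
    (hσ0 : ∀ i ∈ Finset.Icc 1 m, 0 ≤ σ i)
    (hσmono : ∀ i ∈ Finset.Icc 1 m, ∀ j ∈ Finset.Icc 1 m, i ≤ j → σ j ≤ σ i)
    (hON : ∀ i ∈ Finset.Icc 1 m, ∀ j ∈ Finset.Icc 1 m,
      cInner (v i) (v j) = if i = j then 1 else 0)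
    (heig : ∀ i ∈ Finset.Icc 1 m,
      (Mᴴ * M).mulVec (v i) = (((σ i : ℂ)) ^ 2) • v i) :
    ∀ x : ℂ,
      ((appendRow M X)ᴴ * appendRow M X - x • 1).det =
        (∏ i ∈ Finset.Icc 1 m, ((σ i : ℂ) ^ 2 - x)) +
          ∑ i ∈ Finset.Icc 1 m,
            ((‖cInner (v i) (fun j => starRingEnd ℂ (X j))‖ : ℂ)) ^ 2 *
              ∏ j ∈ (Finset.Icc 1 m).erase i, ((σ j : ℂ) ^ 2 - x) :=
  charpoly_after_row_addition_general n m M X σ v hON heig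
end

section
/- There exists an absolute constant C > 0 such that the following holds. Let n be a positive integer, let λ_1, …, λ_n ∈ ℂ, let τ > 0, and define S_τ = { z ∈ ℂ : ∏_{i=1}^n |λ_i − z| ≤ exp(−τn) }. Then the Lebesgue measure of S_τ satisfies μ(S_τ) ≤ C·exp(−C^{−1} τ). -/
/-!
The truncated logarithmic kernel `z ↦ log⁺ (r / ‖w - z‖)` has total integral at most `π r² / 2`
over `ℂ`: its superlevel set at height `t > 0` lies in the disc of radius `r e⁻ᵗ` about `w`.
On `{z | ∏ i, ‖λᵢ - z‖ ≤ ρⁿ}` with `r = e ρ` the `n` kernels centred at the `λᵢ` sum to at least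
`n`, so integrating their sum over this set bounds `n` times its area by `n π (e ρ)² / 2`.
Taking `ρ = e^{-τ}` gives an area of at most `(π e² / 2) e^{-2τ}`.
-/

open MeasureTheory Set Real
open scoped ENNReal

lemma lintegral_ofReal_exp_neg_mul_Ioi {a : ℝ} (ha : 0 < a) :
    ∫⁻ t in Ioi (0 : ℝ), ENNReal.ofReal (exp (-a * t)) = ENNReal.ofReal a⁻¹ := by
  rw [← ofReal_integral_eq_lintegral_ofReal (integrableOn_exp_mul_Ioi (neg_neg_of_pos ha) 0)
    (Filter.Eventually.of_forall fun t => (exp_pos _).le), integral_exp_mul_Ioi (neg_neg_of_pos ha)]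
  congr 1
  field_simp
  simp

lemma setOf_lt_posLog_div_norm_sub_subset_ball {E : Type*} [SeminormedAddCommGroup E]
    (w : E) {r t : ℝ} (hr : 0 ≤ r) (ht : 0 ≤ t) :
    {z : E | t < log⁺ (r / ‖w - z‖)} ⊆ Metric.ball w (r * exp (-t)) := by
  intro z hz
  have hlog : t < log (r / ‖w - z‖) := by
    rcases lt_max_iff.1 (show t < max 0 _ from hz) with h | h
    · linarith
    · exact h
  have hpos : 0 < r / ‖w - z‖ := by
    refine (div_nonneg hr (norm_nonneg _)).lt_of_ne fun h => ?_
    rw [← h, log_zero] at hlog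
    linarith
  have hd : 0 < ‖w - z‖ := by
    rcases div_pos_iff.1 hpos with h | h
    · exact h.2
    · linarith [norm_nonneg (w - z)]
  have hexp : exp t < r / ‖w - z‖ := (lt_log_iff_exp_lt hpos).1 hlog
  rw [lt_div_iff₀ hd] at hexp
  rw [Metric.mem_ball, dist_comm, dist_eq_norm, exp_neg, ← div_eq_mul_inv,
    lt_div_iff₀ (exp_pos t)]
  linarith

lemma lintegral_posLog_div_norm_sub_le (w : ℂ) {r : ℝ} (hr : 0 ≤ r) :
    ∫⁻ z : ℂ, ENNReal.ofReal (log⁺ (r / ‖w - z‖)) ≤ ENNReal.ofReal (π * r ^ 2 / 2) := by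
  rw [lintegral_eq_lintegral_meas_lt _ (Filter.Eventually.of_forall fun _ => posLog_nonneg)
    (by fun_prop)]
  calc ∫⁻ t in Ioi 0, volume {z : ℂ | t < log⁺ (r / ‖w - z‖)}
      ≤ ∫⁻ t in Ioi 0, ENNReal.ofReal (π * r ^ 2) * ENNReal.ofReal (exp (-2 * t)) := by
        refine setLIntegral_mono' measurableSet_Ioi fun t ht => ?_
        refine (measure_mono (setOf_lt_posLog_div_norm_sub_subset_ball w hr (le_of_lt ht))).trans
          (le_of_eq ?_)
        rw [Complex.volume_ball, ← ENNReal.ofReal_pow (by positivity), ← NNReal.coe_real_pi,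
          ENNReal.ofReal_coe_nnreal.symm, ← ENNReal.ofReal_mul (by positivity),
          ← ENNReal.ofReal_mul (by positivity)]
        congr 1
        rw [mul_pow, ← exp_nat_mul]
        ring_nf
    _ = ENNReal.ofReal (π * r ^ 2 / 2) := by
        rw [lintegral_const_mul _ (by fun_prop), lintegral_ofReal_exp_neg_mul_Ioi two_pos,
          ← ENNReal.ofReal_mul (by positivity)]
        ring_nf

lemma card_le_sum_posLog_of_prod_le {ι : Type*} [Fintype ι] {d : ι → ℝ} (hd : ∀ i, 0 < d i)
    {ρ : ℝ} (hρ : 0 < ρ) (h : ∏ i, d i ≤ ρ ^ Fintype.card ι) :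
    (Fintype.card ι : ℝ) ≤ ∑ i, log⁺ (exp 1 * ρ / d i) := by
  have hlog : ∑ i, log (d i) ≤ Fintype.card ι * log ρ := by
    rw [← log_prod fun i _ => (hd i).ne', ← log_pow]
    exact log_le_log (Finset.prod_pos fun i _ => hd i) h
  calc (Fintype.card ι : ℝ)
      ≤ ∑ i, (1 + log ρ - log (d i)) := by
        rw [Finset.sum_sub_distrib, Finset.sum_const, Finset.card_univ, nsmul_eq_mul]
        linarith
    _ = ∑ i, log (exp 1 * ρ / d i) := by
        refine Finset.sum_congr rfl fun i _ => ?_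
        rw [log_div (by positivity) (hd i).ne', log_mul (exp_pos 1).ne' hρ.ne', log_exp]
    _ ≤ ∑ i, log⁺ (exp 1 * ρ / d i) := Finset.sum_le_sum fun i _ => le_max_right _ _

theorem volume_prod_norm_sub_le_pow_le {ι : Type*} [Fintype ι] [Nonempty ι] (lam : ι → ℂ)
    {ρ : ℝ} (hρ : 0 < ρ) :
    volume {z : ℂ | ∏ i, ‖lam i - z‖ ≤ ρ ^ Fintype.card ι} ≤
      ENNReal.ofReal (π * (exp 1 * ρ) ^ 2 / 2) := by
  set E := {z : ℂ | ∏ i, ‖lam i - z‖ ≤ ρ ^ Fintype.card ι}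
  set r := exp 1 * ρ
  have hlam : ∀ᵐ z : ℂ, z ∉ range lam :=
    measure_eq_zero_iff_ae_notMem.1 ((finite_range lam).measure_zero _)
  have hcard : (Fintype.card ι : ℝ≥0∞) ≠ 0 := by simp
  refine (ENNReal.mul_le_mul_iff_right hcard (ENNReal.natCast_ne_top _)).1 ?_
  calc (Fintype.card ι : ℝ≥0∞) * volume E
      = ∫⁻ _ in E, ENNReal.ofReal (Fintype.card ι) := by
        rw [setLIntegral_const, ENNReal.ofReal_natCast]
    _ ≤ ∫⁻ z in E, ∑ i, ENNReal.ofReal (log⁺ (r / ‖lam i - z‖)) := by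
        refine setLIntegral_mono_ae (by fun_prop) ?_
        filter_upwards [hlam] with z hz hzE
        rw [← ENNReal.ofReal_sum_of_nonneg fun i _ => posLog_nonneg]
        refine ENNReal.ofReal_le_ofReal (card_le_sum_posLog_of_prod_le (fun i => ?_) hρ hzE)
        exact norm_pos_iff.2 (sub_ne_zero.2 fun h => hz ⟨i, h⟩)
    _ ≤ ∑ i, ∫⁻ z, ENNReal.ofReal (log⁺ (r / ‖lam i - z‖)) := by
        rw [← lintegral_finsetSum _ fun i _ => by fun_prop]
        exact setLIntegral_le_lintegral _ _
    _ ≤ ∑ _i : ι, ENNReal.ofReal (π * r ^ 2 / 2) :=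
        Finset.sum_le_sum fun i _ => lintegral_posLog_div_norm_sub_le (lam i) (by positivity)
    _ = (Fintype.card ι : ℝ≥0∞) * ENNReal.ofReal (π * r ^ 2 / 2) := by
        rw [Finset.sum_const, Finset.card_univ, nsmul_eq_mul]

theorem log_potential_level_set_measure :
    ∃ C : ℝ, 0 < C ∧
      ∀ (n : ℕ), 0 < n → ∀ (lam : Fin n → ℂ) (τ : ℝ), 0 < τ →
        volume {z : ℂ | (∏ i, ‖lam i - z‖) ≤ Real.exp (-(τ * n))} ≤
          ENNReal.ofReal (C * Real.exp (-(τ / C))) := by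
  refine ⟨15, by norm_num, fun n hn lam τ hτ => ?_⟩
  have : Nonempty (Fin n) := ⟨⟨0, hn⟩⟩
  have hpow : exp (-(τ * n)) = exp (-τ) ^ Fintype.card (Fin n) := by
    rw [Fintype.card_fin, ← exp_nat_mul]
    ring_nf
  rw [hpow]
  refine (volume_prod_norm_sub_le_pow_le lam (exp_pos _)).trans (ENNReal.ofReal_le_ofReal ?_)
  have hconst : π * exp 1 ^ 2 / 2 ≤ 15 := by
    nlinarith [pi_le_four, exp_one_lt_d9, exp_pos 1, pi_pos]
  have hdecay : exp (-τ) ^ 2 ≤ exp (-(τ / 15)) := by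
    rw [← exp_nat_mul, exp_le_exp]
    push_cast
    linarith
  calc π * (exp 1 * exp (-τ)) ^ 2 / 2 = π * exp 1 ^ 2 / 2 * exp (-τ) ^ 2 := by ring
    _ ≤ 15 * exp (-(τ / 15)) := mul_le_mul hconst hdecay (by positivity) (by norm_num)
end
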